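/- There exist positive integers A and B with gcd(A,B)=1 such that for every positive integer n and every nonnegative integer k, the number A·n + B + 9·10^k is composite. -/

import Mathlib

/-!
Take `A = 11111111 = 11 · 73 · 101 · 137 = (10⁸ - 1) / 9`, so that the order of `10` modulo
each of these primes divides `8`. The residue classes `k ≡ 0 (mod 2)`, `k ≡ 1 (mod 4)`,
`k ≡ 3 (mod 8)` and `k ≡ 7 (mod 8)` cover all exponents, and `B = 7923764` is chosen by the
Chinese remainder theorem so that `B + 9 · 10^k` is divisible by `11`, `101`, `73`, `137`
respectively on these classes. Each of these primes also divides `A n`, and is smaller than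
`A n + B + 9 · 10^k`.
-/

theorem Nat.ModEq.pow_mod_of_pow_modEq_one {n a m : ℕ} (h : a ^ m ≡ 1 [MOD n]) (k : ℕ) :
    a ^ k ≡ a ^ (k % m) [MOD n] :=
  calc a ^ k = (a ^ m) ^ (k / m) * a ^ (k % m) := by rw [← pow_mul, ← pow_add, Nat.div_add_mod]
    _ ≡ 1 ^ (k / m) * a ^ (k % m) [MOD n] := (h.pow _).mul_right _
    _ = a ^ (k % m) := by rw [one_pow, one_mul]

theorem exists_prime_dvd_of_lt_eight :
    ∀ r < 8, ∃ p ∈ ({11, 73, 101, 137} : Finset ℕ),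
      p.Prime ∧ p ∣ 11111111 ∧ p ∣ 7923764 + 9 * 10 ^ r := by
  decide

theorem exists_prime_dvd_add_nine_mul_ten_pow (k : ℕ) :
    ∃ p, p.Prime ∧ p ∣ 11111111 ∧ p ∣ 7923764 + 9 * 10 ^ k := by
  obtain ⟨p, -, hp, hpA, hpr⟩ := exists_prime_dvd_of_lt_eight (k % 8) (k.mod_lt (by norm_num))
  have hperiod : 10 ^ 8 ≡ 1 [MOD 11111111] := by decide
  have hmod : 7923764 + 9 * 10 ^ k ≡ 7923764 + 9 * 10 ^ (k % 8) [MOD 11111111] :=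
    ((hperiod.pow_mod_of_pow_modEq_one k).mul_left 9).add_left _
  exact ⟨p, hp, hpA, (hmod.dvd_iff hpA).2 hpr⟩

theorem stmt_6 : ∃ A B : ℕ, 0 < A ∧ 0 < B ∧ Nat.gcd A B = 1 ∧
    ∀ n : ℕ, 1 ≤ n → ∀ k : ℕ,
      1 < A * n + B + 9 * 10 ^ k ∧ ¬ Nat.Prime (A * n + B + 9 * 10 ^ k) := by
  refine ⟨11111111, 7923764, by norm_num, by norm_num, by norm_num, fun n hn k => ?_⟩
  obtain ⟨p, hp, hpA, hpB⟩ := exists_prime_dvd_add_nine_mul_ten_pow k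
  have hpn : p ≤ 11111111 * n :=
    (Nat.le_of_dvd (by norm_num) hpA).trans (Nat.le_mul_of_pos_right _ hn)
  refine ⟨by omega, Nat.not_prime_of_dvd_of_lt ?_ hp.two_le (by omega)⟩
  rw [add_assoc]
  exact (hpA.mul_right n).add hpB
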